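/- Let b̂_n ~ N(β⁰, σ²/n) with β⁰ ≠ 0, D_n → 0, n D_n² → 0, and λ_n ≥ 0 deterministic with √n λ_n → 0. Then √n (S((1−D_n) b̂_n, λ_n) − β⁰) converges in distribution to N(0, σ²), where S is the soft-thresholding operator. -/

import Mathlib

open MeasureTheory ProbabilityTheory Filter
open scoped NNReal

/-- Soft-thresholding operator `S(x, λ) = sgn(x) · max(|x| − λ, 0)`. -/
noncomputable def softThresh (x lam : ℝ) : ℝ := Real.sign x * max (|x| - lam) 0

/-- Soft thresholding moves a point by at most `lam`. -/
lemma abs_softThresh_sub_le (z lam : ℝ) (hlam : 0 ≤ lam) :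
    |softThresh z lam - z| ≤ lam := by
  rcases eq_or_ne z 0 with hz | hz
  · simp [softThresh, hz, hlam]
  rcases le_or_gt lam |z| with h | h
  · have hmax : max (|z| - lam) 0 = |z| - lam := max_eq_left (by linarith)
    have hsz : Real.sign z * |z| = z := by
      rcases lt_trichotomy z 0 with h0 | h0 | h0
      · rw [Real.sign_of_neg h0, abs_of_neg h0]; ring
      · exact absurd h0 hz
      · rw [Real.sign_of_pos h0, abs_of_pos h0]; ring
    have habs : |Real.sign z| = 1 := by
      rcases lt_trichotomy z 0 with h0 | h0 | h0
      · rw [Real.sign_of_neg h0]; norm_num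
      · exact absurd h0 hz
      · rw [Real.sign_of_pos h0]; norm_num
    have : softThresh z lam - z = -(Real.sign z * lam) := by
      simp only [softThresh, hmax]
      rw [mul_sub, hsz]; ring
    rw [this, abs_neg, abs_mul, habs, one_mul, abs_of_nonneg hlam]
  · have hmax : max (|z| - lam) 0 = 0 := max_eq_right (by linarith)
    simp only [softThresh, hmax, mul_zero, zero_sub, abs_neg]
    linarith

/-- The cdf of a probability measure is continuous at any point of measure zero. -/
lemma continuousAt_cdf_of_measure_singleton (μ : Measure ℝ) [IsProbabilityMeasure μ]
    (x : ℝ) (hx : μ {x} = 0) : ContinuousAt (cdf μ) x := by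
  have hmono : Monotone (cdf μ) := monotone_cdf μ
  rw [hmono.continuousAt_iff_leftLim_eq_rightLim]
  have hr : Function.rightLim (cdf μ) x = cdf μ x :=
    hmono.continuousWithinAt_Ioi_iff_rightLim_eq.1
      (((cdf μ).right_continuous x).mono Set.Ioi_subset_Ici_self)
  rw [hr]
  have hsing := (cdf μ).measure_singleton x
  rw [measure_cdf, hx] at hsing
  have h0 : cdf μ x - Function.leftLim (cdf μ) x ≤ 0 :=
    ENNReal.ofReal_eq_zero.mp hsing.symm
  have hle : Function.leftLim (cdf μ) x ≤ cdf μ x := hmono.leftLim_le le_rfl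
  linarith

/-- The probability that an affinely transformed Gaussian lies below a threshold,
expressed through the standardized cdf. -/
lemma prob_linear_gaussian {Ω : Type*} [MeasurableSpace Ω] (P : Measure Ω)
    [IsProbabilityMeasure P] (β0 : ℝ) (V : ℝ≥0) (n : ℕ) (hn : 0 < n)
    (b : Ω → ℝ) (hbm : Measurable b) (hb : Measure.map b P = gaussianReal β0 (V / n))
    (d a : ℝ) (hd : d < 1) :
    (P {ω | Real.sqrt n * ((1 - d) * b ω - β0) ≤ a}).toReal
      = cdf (gaussianReal 0 V) ((a + Real.sqrt n * d * β0) / (1 - d)) := by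
  have hsn : 0 < Real.sqrt n := Real.sqrt_pos.2 (by exact_mod_cast hn)
  have hc : 0 < 1 - d := by linarith
  set r : ℝ := (a / Real.sqrt n + β0) / (1 - d) with hr
  have hset : {ω | Real.sqrt n * ((1 - d) * b ω - β0) ≤ a} = b ⁻¹' Set.Iic r := by
    ext ω
    simp only [Set.mem_setOf_eq, Set.mem_preimage, Set.mem_Iic, hr]
    rw [le_div_iff₀ hc, ← sub_le_iff_le_add, ← le_div_iff₀' hsn, mul_comm (b ω) (1 - d)]
  have hmap : Measure.map (fun y => Real.sqrt n * (y + -β0)) (gaussianReal β0 (V / n))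
      = gaussianReal 0 V := by
    have h1 : Measure.map (· + (-β0)) (gaussianReal β0 (V / n))
        = gaussianReal 0 (V / n) := by
      rw [gaussianReal_map_add_const]; simp
    have hn0 : (n : ℝ) ≠ 0 := by exact_mod_cast hn.ne'
    calc Measure.map (fun y => Real.sqrt n * (y + -β0)) (gaussianReal β0 (V / n))
        = Measure.map ((Real.sqrt n * ·) ∘ (· + -β0)) (gaussianReal β0 (V / n)) := rfl
      _ = Measure.map (Real.sqrt n * ·) (Measure.map (· + -β0) (gaussianReal β0 (V / n))) :=
          (Measure.map_map (measurable_const_mul _) (measurable_add_const _)).symm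
      _ = Measure.map (Real.sqrt n * ·) (gaussianReal 0 (V / n)) := by rw [h1]
      _ = gaussianReal (Real.sqrt n * 0) (.mk (Real.sqrt n ^ 2) (sq_nonneg _) * (V / n)) :=
          gaussianReal_map_const_mul _
      _ = gaussianReal 0 V := by
          rw [mul_zero]
          congr 1
          apply NNReal.coe_injective
          simp only [NNReal.coe_mul, NNReal.coe_div, NNReal.coe_mk, NNReal.coe_natCast]
          rw [Real.sq_sqrt (Nat.cast_nonneg n)]
          field_simp
  have hIic : Set.Iic r
      = (fun y => Real.sqrt n * (y + -β0)) ⁻¹' Set.Iic (Real.sqrt n * (r + -β0)) := by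
    ext y
    simp only [Set.mem_preimage, Set.mem_Iic]
    rw [mul_le_mul_iff_right₀ hsn, add_le_add_iff_right]
  have happ := Measure.map_apply (μ := gaussianReal β0 (V / n))
    (f := fun y => Real.sqrt n * (y + -β0)) (by fun_prop)
    (measurableSet_Iic (a := Real.sqrt n * (r + -β0)))
  rw [hset, ← Measure.map_apply hbm measurableSet_Iic, hb, hIic, ← happ, hmap,
    ← measureReal_def, ← cdf_eq_real]
  congr 1
  rw [hr]
  field_simp
  ring

/-- Asymptotic normality of the soft-thresholded estimator: if `b̂_n ~ N(β⁰, σ²/n)` with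
`β⁰ ≠ 0`, `D_n → 0`, `n D_n² → 0`, and `λ_n ≥ 0` deterministic with `√n λ_n → 0`, then
`√n (S((1−D_n) b̂_n, λ_n) − β⁰)` converges in distribution to `N(0, σ²)` (convergence of
CDFs pointwise; the limit CDF is continuous everywhere). -/
theorem soft_thresh_asymptotic_normality
    {Ω : Type*} [MeasurableSpace Ω] (P : Measure Ω) [IsProbabilityMeasure P]
    (β0 : ℝ) (hβ0 : β0 ≠ 0) (V : ℝ≥0) (hV : 0 < (V : ℝ))
    (b : ℕ → Ω → ℝ) (hbmeas : ∀ n, Measurable (b n))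
    (hb : ∀ n : ℕ, 0 < n → Measure.map (b n) P = gaussianReal β0 (V / n))
    (D lam : ℕ → ℝ) (hlam : ∀ n, 0 ≤ lam n)
    (hD : Tendsto D atTop (nhds 0))
    (hnD2 : Tendsto (fun n : ℕ => (n : ℝ) * (D n) ^ 2) atTop (nhds 0))
    (hlam0 : Tendsto (fun n : ℕ => Real.sqrt n * lam n) atTop (nhds 0)) :
    ∀ x : ℝ, Tendsto
      (fun n : ℕ => (P {ω | Real.sqrt n *
        (softThresh ((1 - D n) * b n ω) (lam n) - β0) ≤ x}).toReal)
      atTop (nhds (cdf (gaussianReal 0 V) x)) := by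
  intro x
  have hVne : V ≠ 0 := by
    intro h
    rw [h] at hV
    simp at hV
  -- the limiting cdf is continuous at x
  have hsing : gaussianReal 0 V {x} = 0 := by
    rw [gaussianReal_apply_eq_integral _ hVne {x},
      MeasureTheory.setIntegral_measure_zero _ (measure_singleton x)]
    simp
  have hcont : ContinuousAt (cdf (gaussianReal 0 V)) x :=
    continuousAt_cdf_of_measure_singleton _ x hsing
  -- √n · D n → 0
  have hsnD : Tendsto (fun n : ℕ => Real.sqrt n * D n) atTop (nhds 0) := by
    rw [tendsto_zero_iff_abs_tendsto_zero]
    have heq : ∀ n : ℕ, |Real.sqrt n * D n| = Real.sqrt ((n : ℝ) * (D n) ^ 2) := by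
      intro n
      rw [Real.sqrt_mul (Nat.cast_nonneg n), Real.sqrt_sq_eq_abs, abs_mul,
        abs_of_nonneg (Real.sqrt_nonneg _)]
    have h2 : Tendsto (fun n : ℕ => Real.sqrt ((n : ℝ) * (D n) ^ 2)) atTop (nhds 0) := by
      simpa only [Function.comp_def, Real.sqrt_zero] using (Real.continuous_sqrt.tendsto 0).comp hnD2
    exact h2.congr fun n => (heq n).symm
  -- the sandwich sequences, converging to x
  have hden : Tendsto (fun n : ℕ => 1 - D n) atTop (nhds (1 : ℝ)) := by
    simpa using (tendsto_const_nhds (x := (1 : ℝ))).sub hD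
  have hu : Tendsto (fun n : ℕ =>
      (x - Real.sqrt n * lam n + Real.sqrt n * D n * β0) / (1 - D n)) atTop (nhds x) := by
    have hnum : Tendsto (fun n : ℕ =>
        x - Real.sqrt n * lam n + Real.sqrt n * D n * β0) atTop (nhds x) := by
      have := ((tendsto_const_nhds (x := x)).sub hlam0).add (hsnD.mul_const β0)
      simpa using this
    simpa [Pi.div_def] using hnum.div hden one_ne_zero
  have hw : Tendsto (fun n : ℕ =>
      (x + Real.sqrt n * lam n + Real.sqrt n * D n * β0) / (1 - D n)) atTop (nhds x) := by
    have hnum : Tendsto (fun n : ℕ =>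
        x + Real.sqrt n * lam n + Real.sqrt n * D n * β0) atTop (nhds x) := by
      have := ((tendsto_const_nhds (x := x)).add hlam0).add (hsnD.mul_const β0)
      simpa using this
    simpa [Pi.div_def] using hnum.div hden one_ne_zero
  have hFu := (hcont.tendsto).comp hu
  have hFw := (hcont.tendsto).comp hw
  -- eventually n ≥ 1 and D n < 1
  have hev : ∀ᶠ n : ℕ in atTop, 0 < n ∧ D n < 1 := by
    have h1 : ∀ᶠ n : ℕ in atTop, D n < 1 := by
      have := hD.eventually (eventually_lt_nhds (show (0 : ℝ) < 1 by norm_num))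
      simpa using this
    filter_upwards [h1, eventually_gt_atTop 0] with n ha hb using ⟨hb, ha⟩
  refine tendsto_of_tendsto_of_tendsto_of_le_of_le' hFu hFw ?_ ?_
  · -- lower bound
    filter_upwards [hev] with n ⟨hn, hd⟩
    rw [Function.comp_apply,
      ← prob_linear_gaussian P β0 V n hn (b n) (hbmeas n) (hb n hn) (D n)
        (x - Real.sqrt n * lam n) hd]
    refine ENNReal.toReal_mono (measure_ne_top P _) (measure_mono ?_)
    intro ω hω
    simp only [Set.mem_setOf_eq] at hω ⊢
    have habs := abs_softThresh_sub_le ((1 - D n) * b n ω) (lam n) (hlam n)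
    have h1 : softThresh ((1 - D n) * b n ω) (lam n) - β0
        ≤ ((1 - D n) * b n ω - β0) + lam n := by
      have := (abs_le.1 habs).2
      linarith
    have h2 : Real.sqrt n * (softThresh ((1 - D n) * b n ω) (lam n) - β0)
        ≤ Real.sqrt n * (((1 - D n) * b n ω - β0) + lam n) :=
      mul_le_mul_of_nonneg_left h1 (Real.sqrt_nonneg _)
    rw [mul_add] at h2
    linarith
  · -- upper bound
    filter_upwards [hev] with n ⟨hn, hd⟩
    rw [Function.comp_apply,
      ← prob_linear_gaussian P β0 V n hn (b n) (hbmeas n) (hb n hn) (D n)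
        (x + Real.sqrt n * lam n) hd]
    refine ENNReal.toReal_mono (measure_ne_top P _) (measure_mono ?_)
    intro ω hω
    simp only [Set.mem_setOf_eq] at hω ⊢
    have habs := abs_softThresh_sub_le ((1 - D n) * b n ω) (lam n) (hlam n)
    have h1 : ((1 - D n) * b n ω - β0)
        ≤ (softThresh ((1 - D n) * b n ω) (lam n) - β0) + lam n := by
      have := (abs_le.1 habs).1
      linarith
    have h2 : Real.sqrt n * ((1 - D n) * b n ω - β0)
        ≤ Real.sqrt n * ((softThresh ((1 - D n) * b n ω) (lam n) - β0) + lam n) :=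
      mul_le_mul_of_nonneg_left h1 (Real.sqrt_nonneg _)
    rw [mul_add] at h2
    linarith
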